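/- arXiv:1308.5392 — 4 statements merged into one kernel-verified Lean document; each statement's English description precedes it below -/
import Mathlib

section
/- For any nonnegative integers m₁, m₂ there exists a constant C(m₁,m₂) > 0 such that for every prime power (or more generally real number) q ≥ 2, defining A_m(q) := (log q)^m Σ_{k≥0} k^m q^{-k} (which equals |ζ_q^{(m)}(1)| for the local zeta factor ζ_q(s) = (1-q^{-s})^{-1}), one has A_{m₁}(q) · A_{m₂}(q) ≤ C(m₁,m₂) · A_{m₁+m₂}(q) when m₁, m₂ > 0, and moreover |ζ_q(1)| ≤ 2 so the inequality |ζ_q^{(m₁)}(1) ζ_q^{(m₂)}(1) / ζ_q^{(m₁+m₂)}(1)| ≤ C holds in all cases. -/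
open Real

/-- auxiliary: the comparison constant. -/
noncomputable def auxB (m : ℕ) : ℝ := ∑' k : ℕ, (k : ℝ) ^ m * (1/2 : ℝ) ^ k

lemma auxB_summable (m : ℕ) : Summable (fun k : ℕ => (k : ℝ) ^ m * (1/2 : ℝ) ^ k) := by
  apply summable_pow_mul_geometric_of_norm_lt_one
  rw [Real.norm_eq_abs, abs_of_nonneg (by norm_num : (0:ℝ) ≤ 1/2)]; norm_num

lemma auxB_nonneg (m : ℕ) : 0 ≤ auxB m :=
  tsum_nonneg fun k => by positivity

lemma geo_summable (m : ℕ) {r : ℝ} (h0 : 0 ≤ r) (h1 : r < 1) :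
    Summable (fun k : ℕ => (k : ℝ) ^ m * r ^ k) := by
  apply summable_pow_mul_geometric_of_norm_lt_one
  rwa [Real.norm_eq_abs, abs_of_nonneg h0]

lemma geo_nonneg (m : ℕ) {r : ℝ} (h0 : 0 ≤ r) :
    0 ≤ ∑' k : ℕ, (k : ℝ) ^ m * r ^ k :=
  tsum_nonneg fun k => by positivity

lemma geo_lower (m : ℕ) {r : ℝ} (h0 : 0 ≤ r) (h1 : r < 1) :
    r ≤ ∑' k : ℕ, (k : ℝ) ^ m * r ^ k := by
  have := Summable.le_tsum (geo_summable m h0 h1) 1 (fun j _ => by positivity)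
  simpa using this

lemma geo_upper (m : ℕ) (hm : 0 < m) {r : ℝ} (h0 : 0 ≤ r) (hh : r ≤ 1/2) :
    (∑' k : ℕ, (k : ℝ) ^ m * r ^ k) ≤ 2 * auxB m * r := by
  have h1 : r < 1 := lt_of_le_of_lt hh (by norm_num)
  have hsum2 : Summable (fun k : ℕ => 2 * ((k : ℝ) ^ m * (1/2 : ℝ) ^ k) * r) := by
    exact ((auxB_summable m).mul_left 2).mul_right r
  have hterm : ∀ k : ℕ, (k : ℝ) ^ m * r ^ k ≤ 2 * ((k : ℝ) ^ m * (1/2 : ℝ) ^ k) * r := by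
    intro k
    cases k with
    | zero => simp [zero_pow hm.ne']
    | succ n =>
      have h1 : r ^ (n + 1) ≤ 2 * (1/2 : ℝ) ^ (n + 1) * r := by
        have := pow_le_pow_left₀ h0 hh n
        calc r ^ (n + 1) = r ^ n * r := by ring
          _ ≤ (1/2 : ℝ) ^ n * r := by
              exact mul_le_mul_of_nonneg_right this h0
          _ = 2 * (1/2 : ℝ) ^ (n + 1) * r := by ring
      have hk : (0 : ℝ) ≤ ((n : ℝ) + 1) ^ m := by positivity
      calc ((n + 1 : ℕ) : ℝ) ^ m * r ^ (n + 1)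
          ≤ ((n + 1 : ℕ) : ℝ) ^ m * (2 * (1/2 : ℝ) ^ (n + 1) * r) := by
            apply mul_le_mul_of_nonneg_left h1
            push_cast; exact hk
        _ = 2 * (((n + 1 : ℕ) : ℝ) ^ m * (1/2 : ℝ) ^ (n + 1)) * r := by ring
  have := Summable.tsum_le_tsum hterm (geo_summable m h0 h1) hsum2
  calc (∑' k : ℕ, (k : ℝ) ^ m * r ^ k)
      ≤ ∑' k : ℕ, 2 * ((k : ℝ) ^ m * (1/2 : ℝ) ^ k) * r := this
    _ = 2 * auxB m * r := by
        rw [tsum_mul_right, tsum_mul_left]; simp only [auxB]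

/-- For nonnegative integers `m₁, m₂` there is `C > 0` such that for every real `q ≥ 2`,
with `A_m(q) := (log q)^m Σ_{k≥0} k^m q^{-k} = |ζ_q^{(m)}(1)|` for the local factor
`ζ_q(s) = (1 - q^{-s})⁻¹`, one has `A_{m₁}(q) A_{m₂}(q) ≤ C · A_{m₁+m₂}(q)`;
moreover `|ζ_q(1)| = (1 - q⁻¹)⁻¹ ≤ 2`. -/
theorem stmt_2 (m₁ m₂ : ℕ) :
    ∃ C > (0 : ℝ), ∀ q : ℝ, 2 ≤ q →
      ((Real.log q) ^ m₁ * (∑' k : ℕ, (k : ℝ) ^ m₁ * q ^ (-(k : ℝ)))) *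
        ((Real.log q) ^ m₂ * (∑' k : ℕ, (k : ℝ) ^ m₂ * q ^ (-(k : ℝ))))
        ≤ C * ((Real.log q) ^ (m₁ + m₂) * (∑' k : ℕ, (k : ℝ) ^ (m₁ + m₂) * q ^ (-(k : ℝ))))
      ∧ (1 - q⁻¹)⁻¹ ≤ (2 : ℝ) := by
  refine ⟨2 + 8 * auxB m₁ * auxB m₂, by nlinarith [auxB_nonneg m₁, auxB_nonneg m₂, mul_nonneg (auxB_nonneg m₁) (auxB_nonneg m₂)], fun q hq => ?_⟩
  have hq0 : (0 : ℝ) < q := lt_of_lt_of_le two_pos hq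
  have hr0 : (0 : ℝ) < q⁻¹ := inv_pos.mpr hq0
  have hrhalf : q⁻¹ ≤ 1/2 := by
    rw [inv_le_comm₀ (by positivity) (by norm_num) ] <;> linarith
  have hr1 : q⁻¹ < 1 := lt_of_le_of_lt hrhalf (by norm_num)
  have hinv : (1 - q⁻¹)⁻¹ ≤ (2 : ℝ) := by
    have h2 : (1/2 : ℝ) ≤ 1 - q⁻¹ := by linarith
    calc (1 - q⁻¹)⁻¹ ≤ (1/2 : ℝ)⁻¹ := by
          apply inv_anti₀ (by norm_num) h2
      _ = 2 := by norm_num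
  have hrw : ∀ m : ℕ, (∑' k : ℕ, (k : ℝ) ^ m * q ^ (-(k : ℝ)))
      = ∑' k : ℕ, (k : ℝ) ^ m * (q⁻¹) ^ k := by
    intro m
    congr 1; funext k
    rw [Real.rpow_neg hq0.le, Real.rpow_natCast, ← inv_pow]
  refine ⟨?_, hinv⟩
  rw [hrw m₁, hrw m₂, hrw (m₁ + m₂)]
  set S : ℕ → ℝ := fun m => ∑' k : ℕ, (k : ℝ) ^ m * (q⁻¹) ^ k with hS
  have hL : 0 ≤ Real.log q := Real.log_nonneg (by linarith)
  have hSnn : ∀ m, 0 ≤ S m := fun m => geo_nonneg m hr0.le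
  have hkey : S m₁ * S m₂ ≤ (2 + 8 * auxB m₁ * auxB m₂) * S (m₁ + m₂) := by
    rcases Nat.eq_zero_or_pos m₁ with h1 | h1
    · subst h1
      have hS0 : S 0 ≤ 2 := by
        have : S 0 = (1 - q⁻¹)⁻¹ := by
          simp only [hS, pow_zero, one_mul]
          exact tsum_geometric_of_lt_one hr0.le hr1
        linarith [this ▸ hinv]
      have h2 := hSnn m₂
      rw [Nat.zero_add]
      nlinarith [mul_nonneg (auxB_nonneg 0) (auxB_nonneg m₂),
        mul_le_mul_of_nonneg_right hS0 h2,
        mul_nonneg (mul_nonneg (auxB_nonneg 0) (auxB_nonneg m₂)) h2]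
    · rcases Nat.eq_zero_or_pos m₂ with h2 | h2
      · subst h2
        have hS0 : S 0 ≤ 2 := by
          have : S 0 = (1 - q⁻¹)⁻¹ := by
            simp only [hS, pow_zero, one_mul]
            exact tsum_geometric_of_lt_one hr0.le hr1
          linarith [this ▸ hinv]
        have h1' := hSnn m₁
        rw [Nat.add_zero]
        nlinarith [mul_nonneg (auxB_nonneg m₁) (auxB_nonneg 0),
          mul_le_mul_of_nonneg_left hS0 h1',
          mul_nonneg (mul_nonneg (auxB_nonneg m₁) (auxB_nonneg 0)) h1']
      · have hu1 : S m₁ ≤ 2 * auxB m₁ * q⁻¹ := geo_upper m₁ h1 hr0.le hrhalf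
        have hu2 : S m₂ ≤ 2 * auxB m₂ * q⁻¹ := geo_upper m₂ h2 hr0.le hrhalf
        have hl : q⁻¹ ≤ S (m₁ + m₂) := geo_lower (m₁ + m₂) hr0.le hr1
        have hb1 := auxB_nonneg m₁
        have hb2 := auxB_nonneg m₂
        have hs1 := hSnn m₁
        have hs2 := hSnn m₂
        have p1 : S m₁ * S m₂ ≤ (2 * auxB m₁ * q⁻¹) * (2 * auxB m₂ * q⁻¹) :=
          mul_le_mul hu1 hu2 hs2 (by positivity)
        have p2 : q⁻¹ * q⁻¹ ≤ q⁻¹ := by nlinarith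
        have p3 : 4 * auxB m₁ * auxB m₂ * q⁻¹ ≤ 4 * auxB m₁ * auxB m₂ * S (m₁ + m₂) :=
          mul_le_mul_of_nonneg_left hl (by positivity)
        nlinarith [p1, mul_le_mul_of_nonneg_left p2 (by positivity : (0:ℝ) ≤ 4 * auxB m₁ * auxB m₂),
          p3, hSnn (m₁ + m₂), mul_nonneg hb1 hb2,
          mul_nonneg (mul_nonneg hb1 hb2) (hSnn (m₁ + m₂))]
  calc (Real.log q ^ m₁ * S m₁) * (Real.log q ^ m₂ * S m₂)
      = Real.log q ^ (m₁ + m₂) * (S m₁ * S m₂) := by rw [pow_add]; ring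
    _ ≤ Real.log q ^ (m₁ + m₂) * ((2 + 8 * auxB m₁ * auxB m₂) * S (m₁ + m₂)) := by
        apply mul_le_mul_of_nonneg_left hkey (by positivity)
    _ = (2 + 8 * auxB m₁ * auxB m₂) * (Real.log q ^ (m₁ + m₂) * S (m₁ + m₂)) := by ring
end

section
/- Let Λ ⊂ ℝ^d be a full-rank lattice with dual Λ*, K ≥ 1 an integer, and t > 1 a real number. Then Σ_{X ∈ (Λ*)^K, X ≠ 0} ‖X‖^{-dK-t} ≤ 6^{dK} ζ(t) λ_d(Λ)^{dK+t}, where ζ is the Riemann zeta function. -/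
/-!
Fix linearly independent lattice vectors `v₁, …, v_d` of norm at most `c`, with `c` just above
`λ_d(Λ)`. A dual vector `X ∈ (Λ*)^K` is determined by the integer matrix `m = (⟨X_k, v_j⟩)`, and
`‖m‖_∞ ≤ c ‖X‖`, so the sum is at most `c^{dK+t} Σ_{m ∈ ℤ^{dK} ∖ 0} ‖m‖_∞^{-dK-t}`. Grouping the
`m` into shells `k ≤ ‖m‖_∞ < k + 1`, each holding at most `(3k)^{dK}` points, bounds the latter by
`3^{dK} ζ(t)`. Letting `c ↓ λ_d(Λ)` finishes the proof, since `3^{dK} ≤ 6^{dK}`.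
-/

/-- The `i`-th successive minimum (`0`-indexed: `succMin Λ i = λ_{i+1}(Λ)`). -/
noncomputable def succMin {E : Type*} [NormedAddCommGroup E] [NormedSpace ℝ E]
    (Λ : AddSubgroup E) (i : ℕ) : ℝ :=
  sInf {r : ℝ | ∃ v : Fin (i + 1) → E, LinearIndependent ℝ v ∧ ∀ j, v j ∈ Λ ∧ ‖v j‖ ≤ r}

open Finset

lemma summable_natCast_add_one_rpow_neg {t : ℝ} (ht : 1 < t) :
    Summable fun n : ℕ => ((n : ℝ) + 1) ^ (-t) := by
  simpa using (summable_nat_add_iff 1).mpr (Real.summable_nat_rpow.mpr (neg_lt_neg ht))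

lemma rpow_neg_le_mul_rpow_neg {a b c s : ℝ} (ha : 0 < a) (hc : 0 < c) (hs : 0 ≤ s)
    (h : a ≤ c * b) : b ^ (-s) ≤ c ^ s * a ^ (-s) := by
  have hb : 0 < b := pos_of_mul_pos_right (ha.trans_le h) hc.le
  calc b ^ (-s) = c ^ s * (c * b) ^ (-s) := by
        rw [Real.mul_rpow hc.le hb.le, Real.rpow_neg hc.le, mul_inv_cancel_left₀ (by positivity)]
    _ ≤ c ^ s * a ^ (-s) :=
        mul_le_mul_of_nonneg_left (Real.rpow_le_rpow_of_nonpos ha h (neg_nonpos.mpr hs))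
          (by positivity)

namespace IntVector

variable {ι : Type*} [Fintype ι]

lemma one_le_norm {m : ι → ℤ} (hm : m ≠ 0) : 1 ≤ ‖m‖ := by
  obtain ⟨i, hi⟩ := Function.ne_iff.mp hm
  calc (1 : ℝ) ≤ |(m i : ℝ)| := by exact_mod_cast Int.one_le_abs hi
    _ = ‖m i‖ := (Int.norm_eq_abs _).symm
    _ ≤ ‖m‖ := norm_le_pi_norm m i

lemma card_le_of_forall_norm_lt [DecidableEq ι] (S : Finset (ι → ℤ)) (r : ℕ)
    (hS : ∀ m ∈ S, ‖m‖ < r + 1) : #S ≤ (2 * r + 1) ^ Fintype.card ι := by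
  calc #S ≤ #(Fintype.piFinset fun _ : ι => Icc (-r : ℤ) r) := by
        refine card_le_card fun m hm => Fintype.mem_piFinset.mpr fun i => ?_
        have : |(m i : ℝ)| < r + 1 := by
          rw [← Int.norm_eq_abs]; exact (norm_le_pi_norm m i).trans_lt (hS m hm)
        obtain ⟨hlo, hhi⟩ := abs_lt.mp this
        norm_cast at hlo hhi
        exact mem_Icc.mpr ⟨by omega, by omega⟩
    _ = (2 * r + 1) ^ Fintype.card ι := by
        simp only [Fintype.card_piFinset, Int.card_Icc, prod_const, card_univ]
        congr 1
        omega

theorem sum_norm_rpow_neg_le {t : ℝ} (ht : 1 < t) (S : Finset (ι → ℤ)) (hS : 0 ∉ S) :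
    ∑ m ∈ S, ‖m‖ ^ (-(Fintype.card ι + t)) ≤
      3 ^ Fintype.card ι * ∑' n : ℕ, ((n : ℝ) + 1) ^ (-t) := by
  classical
  set n := Fintype.card ι
  -- shell `k` holds the `m` with `k + 1 ≤ ‖m‖ < k + 2`, at most `(2k + 3)^n ≤ (3(k + 1))^n` of them
  set shell : (ι → ℤ) → ℕ := fun m => ⌊‖m‖⌋₊ - 1
  have mem_shell : ∀ m ∈ S, ⌊‖m‖⌋₊ = shell m + 1 := fun m hm => by
    have : 1 ≤ ⌊‖m‖⌋₊ := Nat.le_floor (by simpa using one_le_norm (ne_of_mem_of_not_mem hm hS))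
    exact (Nat.sub_add_cancel this).symm
  have shell_bound : ∀ k, ∑ m ∈ S with shell m = k, ‖m‖ ^ (-(n + t)) ≤
      3 ^ n * ((k : ℝ) + 1) ^ (-t) := fun k => by
    have hk : 0 < (k : ℝ) + 1 := by positivity
    have norm_mem : ∀ m ∈ {m ∈ S | shell m = k}, (k : ℝ) + 1 ≤ ‖m‖ ∧ ‖m‖ < ↑(k + 1) + 1 := by
      intro m hm
      obtain ⟨hmS, rfl⟩ := mem_filter.mp hm
      have := (Nat.floor_eq_iff (norm_nonneg m)).mp (mem_shell m hmS)
      exact_mod_cast this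
    calc ∑ m ∈ S with shell m = k, ‖m‖ ^ (-(n + t))
        ≤ ∑ m ∈ S with shell m = k, ((k : ℝ) + 1) ^ (-(n + t)) :=
          sum_le_sum fun m hm => Real.rpow_le_rpow_of_nonpos hk (norm_mem m hm).1
            (by linarith [Nat.cast_nonneg (α := ℝ) n])
      _ ≤ (3 * ((k : ℝ) + 1)) ^ n * ((k : ℝ) + 1) ^ (-(n + t)) := by
          rw [sum_const, nsmul_eq_mul]
          gcongr
          have := card_le_of_forall_norm_lt _ (k + 1) fun m hm => (norm_mem m hm).2
          calc (_ : ℝ) ≤ ((2 * (k + 1) + 1 : ℕ) : ℝ) ^ n := by exact_mod_cast this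
            _ ≤ _ := by gcongr; push_cast; linarith
      _ = 3 ^ n * ((k : ℝ) + 1) ^ (-t) := by
          rw [mul_pow, mul_assoc, ← Real.rpow_natCast ((k : ℝ) + 1), ← Real.rpow_add hk]
          ring_nf
  calc ∑ m ∈ S, ‖m‖ ^ (-(n + t))
      = ∑ k ∈ range (S.sup fun m => ⌊‖m‖⌋₊), ∑ m ∈ S with shell m = k, ‖m‖ ^ (-(n + t)) := by
        refine (sum_fiberwise_of_maps_to (fun m hm => mem_range.mpr ?_) _).symm
        have := le_sup (f := fun m => ⌊‖m‖⌋₊) hm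
        have := mem_shell m hm
        omega
    _ ≤ ∑ k ∈ range (S.sup fun m => ⌊‖m‖⌋₊), 3 ^ n * ((k : ℝ) + 1) ^ (-t) :=
        sum_le_sum fun k _ => shell_bound k
    _ ≤ 3 ^ n * ∑' n : ℕ, ((n : ℝ) + 1) ^ (-t) := by
        rw [← mul_sum]
        gcongr
        exact (summable_natCast_add_one_rpow_neg ht).sum_le_tsum _ fun _ _ => by positivity

end IntVector

section DualLattice

variable {E : Type*} [NormedAddCommGroup E] [InnerProductSpace ℝ E]
  {ι κ : Type*}

-- On the dual lattice the pairings are integers; `round` just reads them in `ℤ`.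
noncomputable def pairingCoords (v : ι → E) (X : PiLp 2 fun _ : κ => E) : ι × κ → ℤ :=
  fun p => round (inner ℝ (X p.2) (v p.1))

lemma pairingCoords_injOn (v : Module.Basis ι ℝ E) :
    Set.InjOn (pairingCoords v)
      {X : PiLp 2 fun _ : κ => E | ∀ j k, ∃ n : ℤ, inner ℝ (X k) (v j) = n} := by
  intro X hX Y hY hXY
  refine PiLp.ext fun k => InnerProductSpace.ext_inner_right_basis v fun j => ?_
  obtain ⟨a, ha⟩ := hX j k
  obtain ⟨b, hb⟩ := hY j k
  have := congrFun hXY (j, k)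
  simp only [pairingCoords, ha, hb, round_intCast] at this
  rw [ha, hb, this]

lemma pairingCoords_ne_zero (v : Module.Basis ι ℝ E) {X : PiLp 2 fun _ : κ => E}
    (hX : ∀ j k, ∃ n : ℤ, inner ℝ (X k) (v j) = n) (hX0 : X ≠ 0) : pairingCoords v X ≠ 0 := by
  have h0 : pairingCoords v (0 : PiLp 2 fun _ : κ => E) = 0 := by
    ext p; simp [pairingCoords]
  exact fun h => hX0 (pairingCoords_injOn v hX (fun j k => ⟨0, by simp⟩) (h.trans h0.symm))

lemma norm_pairingCoords_le [Fintype ι] [Fintype κ] (v : ι → E) {c : ℝ} (hc : 0 ≤ c)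
    (hv : ∀ j, ‖v j‖ ≤ c)
    {X : PiLp 2 fun _ : κ => E} (hX : ∀ j k, ∃ n : ℤ, inner ℝ (X k) (v j) = n) :
    ‖pairingCoords v X‖ ≤ c * ‖X‖ := by
  refine (pi_norm_le_iff_of_nonneg (by positivity)).mpr fun ⟨j, k⟩ => ?_
  obtain ⟨n, hn⟩ := hX j k
  calc ‖pairingCoords v X (j, k)‖ = |inner ℝ (X k) (v j)| := by
        simp [pairingCoords, hn, Int.norm_eq_abs]
    _ ≤ ‖X k‖ * ‖v j‖ := abs_real_inner_le_norm _ _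
    _ ≤ ‖X‖ * c := mul_le_mul (PiLp.norm_apply_le X k) (hv j) (norm_nonneg _) (norm_nonneg _)
    _ = c * ‖X‖ := mul_comm _ _

theorem sum_norm_rpow_neg_le_of_basis [Fintype ι] [Fintype κ] (v : Module.Basis ι ℝ E)
    {c : ℝ} (hc : 0 < c) (hv : ∀ j, ‖v j‖ ≤ c) {t : ℝ} (ht : 1 < t)
    (S : Finset (PiLp 2 fun _ : κ => E))
    (hS : ∀ X ∈ S, (∀ j k, ∃ n : ℤ, inner ℝ (X k) (v j) = n) ∧ X ≠ 0) :
    ∑ X ∈ S, ‖X‖ ^ (-((Fintype.card ι * Fintype.card κ : ℝ) + t)) ≤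
      3 ^ (Fintype.card ι * Fintype.card κ) * (∑' n : ℕ, ((n : ℝ) + 1) ^ (-t)) *
        c ^ ((Fintype.card ι * Fintype.card κ : ℝ) + t) := by
  classical
  set s : ℝ := (Fintype.card ι * Fintype.card κ : ℝ) + t
  have hs : s = Fintype.card (ι × κ) + t := by simp [s, Fintype.card_prod]
  calc ∑ X ∈ S, ‖X‖ ^ (-s) ≤ ∑ X ∈ S, c ^ s * ‖pairingCoords v X‖ ^ (-s) :=
        sum_le_sum fun X hX => rpow_neg_le_mul_rpow_neg
          (zero_lt_one.trans_le <|
            IntVector.one_le_norm (pairingCoords_ne_zero v (hS X hX).1 (hS X hX).2))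
          hc (by positivity) (norm_pairingCoords_le v hc.le hv (hS X hX).1)
    _ = c ^ s * ∑ m ∈ S.image (pairingCoords v), ‖m‖ ^ (-s) := by
        rw [mul_sum, sum_image ((pairingCoords_injOn v).mono fun X hX => (hS X hX).1)]
    _ ≤ c ^ s * (3 ^ Fintype.card (ι × κ) * ∑' n : ℕ, ((n : ℝ) + 1) ^ (-t)) := by
        rw [hs]
        gcongr
        refine IntVector.sum_norm_rpow_neg_le ht _ fun h0 => ?_
        obtain ⟨X, hX, hX0⟩ := mem_image.mp h0
        exact pairingCoords_ne_zero v (hS X hX).1 (hS X hX).2 hX0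
    _ = _ := by rw [Fintype.card_prod]; ring

theorem tsum_norm_rpow_neg_le_of_basis_mem [Fintype ι] [Fintype κ] (Λ : AddSubgroup E)
    (v : Module.Basis ι ℝ E) (hvΛ : ∀ j, v j ∈ Λ) {c : ℝ} (hc : 0 < c) (hv : ∀ j, ‖v j‖ ≤ c)
    {t : ℝ} (ht : 1 < t) :
    ∑' X : {X : PiLp 2 (fun _ : κ => E) //
        (∀ k, ∀ y ∈ Λ, ∃ n : ℤ, (inner ℝ (X k) y : ℝ) = n) ∧ X ≠ 0},
      ‖(X : PiLp 2 (fun _ : κ => E))‖ ^ (-((Fintype.card ι * Fintype.card κ : ℝ) + t)) ≤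
      3 ^ (Fintype.card ι * Fintype.card κ) * (∑' n : ℕ, ((n : ℝ) + 1) ^ (-t)) *
        c ^ ((Fintype.card ι * Fintype.card κ : ℝ) + t) := by
  refine Real.tsum_le_of_sum_le (fun _ => by positivity) fun u => ?_
  refine (sum_map u (Function.Embedding.subtype _) fun X => ‖X‖ ^ _).symm.trans_le ?_
  refine sum_norm_rpow_neg_le_of_basis v hc hv ht _ fun X hX => ?_
  obtain ⟨⟨X, hXΛ, hX0⟩, -, rfl⟩ := mem_map.mp hX
  exact ⟨fun j k => hXΛ k (v j) (hvΛ j), hX0⟩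

end DualLattice

lemma succMin_nonneg {E : Type*} [NormedAddCommGroup E] [NormedSpace ℝ E]
    (Λ : AddSubgroup E) (i : ℕ) : 0 ≤ succMin Λ i :=
  Real.sInf_nonneg fun _ ⟨_, _, hv⟩ => (norm_nonneg _).trans (hv 0).2

lemma exists_basis_mem_norm_le_of_succMin_lt {E : Type*} [NormedAddCommGroup E]
    [NormedSpace ℝ E] {d : ℕ} (hd : 0 < d) (b : Module.Basis (Fin d) ℝ E) (Λ : AddSubgroup E)
    (hbΛ : ∀ j, b j ∈ Λ) {c : ℝ} (hc : succMin Λ (d - 1) < c) :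
    ∃ B : Module.Basis (Fin d) ℝ E, ∀ j, B j ∈ Λ ∧ ‖B j‖ ≤ c := by
  have hd' : d - 1 + 1 = d := Nat.sub_add_cancel hd
  have hne : {r : ℝ | ∃ v : Fin (d - 1 + 1) → E,
      LinearIndependent ℝ v ∧ ∀ j, v j ∈ Λ ∧ ‖v j‖ ≤ r}.Nonempty :=
    ⟨∑ j, ‖b j‖, b ∘ Fin.cast hd', b.linearIndependent.comp _ (Fin.cast_injective hd'),
      fun j => ⟨hbΛ _, single_le_sum (f := fun j => ‖b j‖) (fun _ _ => norm_nonneg _)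
        (mem_univ _)⟩⟩
  obtain ⟨r, ⟨v, hv, hvΛ⟩, hr⟩ := exists_lt_of_csInf_lt hne hc
  let B := (basisOfLinearIndependentOfCardEqFinrank hv
    (by rw [Fintype.card_fin, hd', Module.finrank_eq_card_basis b, Fintype.card_fin])).reindex
      (finCongr hd')
  refine ⟨B, fun j => ?_⟩
  simp only [B, Module.Basis.reindex_apply, coe_basisOfLinearIndependentOfCardEqFinrank]
  exact ⟨(hvΛ _).1, (hvΛ _).2.trans hr.le⟩

theorem stmt_6_general (d K : ℕ) (hd : 0 < d)
    (b : Module.Basis (Fin d) ℝ (EuclideanSpace ℝ (Fin d)))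
    (Λ : AddSubgroup (EuclideanSpace ℝ (Fin d)))
    (hΛ : Λ = AddSubgroup.closure (Set.range b))
    (t : ℝ) (ht : 1 < t) :
    ∑' X : {X : PiLp 2 (fun _ : Fin K => EuclideanSpace ℝ (Fin d)) //
        (∀ k, ∀ y ∈ Λ, ∃ n : ℤ, (inner ℝ (X k) y : ℝ) = n) ∧ X ≠ 0},
      ‖(X : PiLp 2 (fun _ : Fin K => EuclideanSpace ℝ (Fin d)))‖ ^ (-((d * K : ℝ) + t))
      ≤ 6 ^ (d * K) * (∑' n : ℕ, ((n : ℝ) + 1) ^ (-t)) *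
          succMin Λ (d - 1) ^ ((d * K : ℝ) + t) := by
  have hbΛ : ∀ j, b j ∈ Λ := fun j => hΛ ▸ AddSubgroup.subset_closure (Set.mem_range_self j)
  have bound_of_gt : ∀ c, succMin Λ (d - 1) < c →
      ∑' X : {X : PiLp 2 (fun _ : Fin K => EuclideanSpace ℝ (Fin d)) //
        (∀ k, ∀ y ∈ Λ, ∃ n : ℤ, (inner ℝ (X k) y : ℝ) = n) ∧ X ≠ 0},
        ‖(X : PiLp 2 (fun _ : Fin K => EuclideanSpace ℝ (Fin d)))‖ ^ (-((d * K : ℝ) + t)) ≤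
      3 ^ (d * K) * (∑' n : ℕ, ((n : ℝ) + 1) ^ (-t)) * c ^ ((d * K : ℝ) + t) := by
    intro c hc
    obtain ⟨B, hB⟩ := exists_basis_mem_norm_le_of_succMin_lt hd b Λ hbΛ hc
    simpa using tsum_norm_rpow_neg_le_of_basis_mem (κ := Fin K) Λ B (fun j => (hB j).1)
      ((succMin_nonneg Λ _).trans_lt hc) (fun j => (hB j).2) ht
  have hζ : 0 ≤ ∑' n : ℕ, ((n : ℝ) + 1) ^ (-t) := tsum_nonneg fun _ => by positivity
  refine (ContinuousWithinAt.closure_le (x := succMin Λ (d - 1)) (s := Set.Ioi _) (by simp)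
    continuousWithinAt_const ?_ bound_of_gt).trans ?_
  · exact ((Real.continuousAt_rpow_const _ _ (Or.inr (by positivity))).const_mul
      _).continuousWithinAt
  · have := succMin_nonneg Λ (d - 1)
    gcongr
    norm_num

/-- Let `Λ ⊂ ℝ^d` be a full-rank lattice with dual `Λ*`, `K ≥ 1` an integer and `t > 1`.
Then `Σ_{0 ≠ X ∈ (Λ*)^K} ‖X‖^{-dK-t} ≤ 6^{dK} ζ(t) λ_d(Λ)^{dK+t}`, where
`ζ(t) = Σ_{n ≥ 1} n^{-t}` is the Riemann zeta function. -/
theorem stmt_6 (d K : ℕ) (hd : 0 < d) (hK : 0 < K)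
    (b : Module.Basis (Fin d) ℝ (EuclideanSpace ℝ (Fin d)))
    (Λ : AddSubgroup (EuclideanSpace ℝ (Fin d)))
    (hΛ : Λ = AddSubgroup.closure (Set.range b))
    (t : ℝ) (ht : 1 < t) :
    ∑' X : {X : PiLp 2 (fun _ : Fin K => EuclideanSpace ℝ (Fin d)) //
        (∀ k, ∀ y ∈ Λ, ∃ n : ℤ, (inner ℝ (X k) y : ℝ) = n) ∧ X ≠ 0},
      ‖(X : PiLp 2 (fun _ : Fin K => EuclideanSpace ℝ (Fin d)))‖ ^ (-((d * K : ℝ) + t))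
      ≤ 6 ^ (d * K) * (∑' n : ℕ, ((n : ℝ) + 1) ^ (-t)) *
          succMin Λ (d - 1) ^ ((d * K : ℝ) + t) :=
  stmt_6_general d K hd b Λ hΛ t ht
end

section
/- Let F be a number field and let N ⊆ U₀(A_F) be the compact set of upper unitriangular adelic matrices whose strictly-upper entries lie in a fixed compact set F₊ containing a fundamental domain for F in A_F. Then for every a in the Siegel domain A₀^{G,∞}(T₁^F) (i.e. α(H₀(a) - T₁^F) ≥ 0 for all simple roots α), the conjugate a^{-1} N a is contained in the compact set N^{(1)} of unitriangular matrices whose finite-adelic entries are integral and whose archimedean entries u_{ij} satisfy ‖u_{ij}‖ ≤ c₁ D_F^{c₂}, with constants c₁, c₂ depending only on n and d = [F:ℚ]. -/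
/-!
Here `H` stands for `H₀(a)`, and `e^{(H_j - H_i)/d} u_{ij}` is the archimedean `(i, j)`-entry
of `a⁻¹ u a`. The Siegel condition bounds every negative simple root:
`H_{i+1} - H_i ≤ -log c_F = log (D_F (4/π)^d)`. Telescoping over at most `n - 1` consecutive
simple roots gives `H_j - H_i ≤ (n - 1) log (D_F (4/π)^d)` for `i < j`, so the conjugation
factor is at most `(4/π)^{n-1} D_F^{(n-1)/d}`. The fundamental-domain bound contributes a
factor `≪_d √D_F`, whence `c₂ = (n - 1)/d + 1/2`.
-/

open NumberField

theorem Fin.sub_le_nsmul_of_forall_succ_sub_le {α : Type*} [AddCommGroup α] [LinearOrder α]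
    [IsOrderedAddMonoid α] {n : ℕ} {f : Fin n → α} {B : α}
    (h : ∀ i j : Fin n, (i : ℕ) + 1 = j → f j - f i ≤ B) {i j : Fin n} (hij : i ≤ j) :
    f j - f i ≤ ((j : ℕ) - i) • B := by
  obtain ⟨m, rfl⟩ : ∃ m, n = m + 1 := ⟨n - 1, by omega⟩
  have hmono : Monotone fun k : Fin (m + 1) => (k : ℕ) • B - f k := by
    refine Fin.monotone_iff_le_succ.2 fun k => ?_
    rw [← sub_nonneg]
    convert sub_nonneg.2 (h k.castSucc k.succ (by simp)) using 1
    simp only [Fin.val_castSucc, Fin.val_succ, succ_nsmul]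
    abel
  rw [← sub_nonneg]
  convert sub_nonneg.2 (hmono hij) using 1
  dsimp only
  rw [sub_nsmul B (Fin.le_def.1 hij)]
  abel

theorem Real.exp_div_le_rpow_of_le_mul_log {x t m d : ℝ} (hx : 0 < x) (hd : 0 ≤ d)
    (h : t ≤ m * Real.log x) : Real.exp (t / d) ≤ x ^ (m / d) := by
  rw [Real.rpow_def_of_pos hx]
  gcongr
  exact (div_le_div_of_nonneg_right h hd).trans_eq (by ring)

theorem NumberField.one_le_abs_discr (K : Type*) [Field K] [NumberField K] :
    (1 : ℝ) ≤ |(discr K : ℝ)| := by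
  exact_mod_cast Int.one_le_abs (discr_ne_zero K)

theorem stmt_16_general (n d : ℕ) (hd : 1 ≤ d) :
    ∃ c₁ > (0 : ℝ), ∃ c₂ > (0 : ℝ), ∀ (K : Type) [Field K] [NumberField K],
      Module.finrank ℚ K = d →
      ∀ H : Fin n → ℝ,
        (∀ i j : Fin n, (i : ℕ) + 1 = (j : ℕ) →
          Real.log ((Real.pi / 4) ^ d / |(NumberField.discr K : ℝ)|) ≤ H i - H j) →
        ∀ u : Matrix (Fin n) (Fin n) (EuclideanSpace ℝ (Fin d)),
          (∀ i j : Fin n, i < j →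
            ‖u i j‖ ≤ 2 ^ (2 * d) *
              ((MeasureTheory.volume
                  (Metric.ball (0 : EuclideanSpace ℝ (Fin d)) 1)).toReal)⁻¹ ^ 2 *
              Real.sqrt |(NumberField.discr K : ℝ)|) →
          ∀ i j : Fin n, i < j →
            Real.exp ((H j - H i) / d) * ‖u i j‖
              ≤ c₁ * |(NumberField.discr K : ℝ)| ^ c₂ := by
  set v := (MeasureTheory.volume (Metric.ball (0 : EuclideanSpace ℝ (Fin d)) 1)).toReal
  have hv : 0 < v :=
    ENNReal.toReal_pos (Metric.measure_ball_pos _ _ one_pos).ne'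
      MeasureTheory.measure_ball_lt_top.ne
  refine ⟨(4 / Real.pi) ^ (n - 1) * (2 ^ (2 * d) * v⁻¹ ^ 2), by positivity,
    ((n - 1 : ℕ) : ℝ) / d + 1 / 2, by positivity, ?_⟩
  intro K _ _ _ H hH u hu i j hij
  set D := |(NumberField.discr K : ℝ)|
  have hD : 1 ≤ D := one_le_abs_discr K
  set L := Real.log (D * (4 / Real.pi) ^ d)
  have hL : 0 ≤ L := Real.log_nonneg (one_le_mul_of_one_le_of_one_le hD
    (one_le_pow₀ ((one_le_div Real.pi_pos).2 Real.pi_le_four)))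
  have hsimple : ∀ i j : Fin n, (i : ℕ) + 1 = j → H j - H i ≤ L := by
    intro i j h
    have hcF : Real.log ((Real.pi / 4) ^ d / D) = -L := by
      rw [← Real.log_inv]
      congr 1
      field_simp
      rw [← mul_pow, div_mul_div_comm, mul_comm Real.pi, div_self (by positivity), one_pow]
    linarith [hH i j h]
  have hroot : H j - H i ≤ ((n - 1 : ℕ) : ℝ) * L := by
    refine (Fin.sub_le_nsmul_of_forall_succ_sub_le hsimple hij.le).trans ?_
    rw [nsmul_eq_mul]
    exact mul_le_mul_of_nonneg_right (by exact_mod_cast (by omega : (j : ℕ) - i ≤ n - 1)) hL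
  calc Real.exp ((H j - H i) / d) * ‖u i j‖
      ≤ (D * (4 / Real.pi) ^ d) ^ (((n - 1 : ℕ) : ℝ) / d) *
          (2 ^ (2 * d) * v⁻¹ ^ 2 * D ^ (1 / 2 : ℝ)) := by
        rw [← Real.sqrt_eq_rpow]
        gcongr
        · exact Real.exp_div_le_rpow_of_le_mul_log (by positivity) (Nat.cast_nonneg d) hroot
        · exact hu i j hij
    _ = _ := by
        have hd' : (d : ℝ) ≠ 0 := Nat.cast_ne_zero.2 (by omega)
        rw [Real.mul_rpow (by positivity) (by positivity), ← Real.rpow_natCast_mul (by positivity),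
          mul_div_cancel₀ _ hd', Real.rpow_natCast, Real.rpow_add (by positivity)]
        ring

/-- Conjugation of the compact set `𝒩` by elements of the Siegel domain: there exist
constants `c₁, c₂` depending only on `n` and `d = [F:ℚ]` such that for every number field
`F` of degree `d`, every `H = H₀(a)` satisfying the Siegel condition
`α(H - T₁^F) ≥ 0`, i.e. `H_i - H_{i+1} ≥ log c_F` with `c_F = (π/4)^d D_F^{-1}`, and every
upper triangular matrix `u` whose archimedean entries satisfy
`‖u_{ij}‖ ≤ 2^{2d} v_d^{-2} √D_F` (the fundamental-domain bound), the archimedean entries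
of `a^{-1} u a`, namely `e^{(H_j - H_i)/d} u_{ij}` for `i < j`, are bounded by
`c₁ D_F^{c₂}`. -/
theorem stmt_16 (n d : ℕ) (hn : 2 ≤ n) (hd : 1 ≤ d) :
    ∃ c₁ > (0 : ℝ), ∃ c₂ > (0 : ℝ), ∀ (K : Type) [Field K] [NumberField K],
      Module.finrank ℚ K = d →
      ∀ H : Fin n → ℝ,
        (∀ i j : Fin n, (i : ℕ) + 1 = (j : ℕ) →
          Real.log ((Real.pi / 4) ^ d / |(NumberField.discr K : ℝ)|) ≤ H i - H j) →
        ∀ u : Matrix (Fin n) (Fin n) (EuclideanSpace ℝ (Fin d)),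
          (∀ i j : Fin n, i < j →
            ‖u i j‖ ≤ 2 ^ (2 * d) *
              ((MeasureTheory.volume
                  (Metric.ball (0 : EuclideanSpace ℝ (Fin d)) 1)).toReal)⁻¹ ^ 2 *
              Real.sqrt |(NumberField.discr K : ℝ)|) →
          ∀ i j : Fin n, i < j →
            Real.exp ((H j - H i) / d) * ‖u i j‖
              ≤ c₁ * |(NumberField.discr K : ℝ)| ^ c₂ :=
  stmt_16_general n d hd
end

section
/- Let F be a number field of degree d, K ≥ 1 an integer, q ≥ 0 an integer, b ⊆ O_F an ideal of norm at most √D_F, and a = b^q. Then for all real t ≥ 2: Σ_{X ∈ (a^{-1})^K, X ≠ 0} ‖X‖^{-dK-t} ≪_{d,K} D_F^{(dK+t)q}, where a^{-1} is the inverse fractional ideal and (a^{-1})^K is viewed as a lattice in ℝ^{dK} via the K-fold sum of the canonical embedding of a^{-1}, and the implied constant depends only on d and K. -/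
open Finset

lemma sep_core (m n0 : ℕ) (hmn : m + 2 ≤ n0) :
    ∃ C : ℝ, 0 < C ∧ ∀ (α : Type) (u : α → EuclideanSpace ℝ (Fin m)),
      (∀ a, 1 ≤ ‖u a‖) → (∀ a b : α, a ≠ b → 1 ≤ ‖u a - u b‖) →
      Summable (fun a => ‖u a‖ ^ (-(n0 : ℝ))) ∧
        ∑' a, ‖u a‖ ^ (-(n0 : ℝ)) ≤ C := by
  classical
  rcases Nat.eq_zero_or_pos m with hm0 | hm0
  · subst hm0
    refine ⟨1, one_pos, fun α u h1 hsep => ?_⟩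
    have hemp : IsEmpty α := by
      refine ⟨fun a => ?_⟩
      have h := h1 a
      have hu : ‖u a‖ = 0 := by
        rw [EuclideanSpace.norm_eq]; simp
      rw [hu] at h; linarith
    refine ⟨summable_empty, ?_⟩
    rw [tsum_empty]; norm_num
  have hFin : Nonempty (Fin m) := ⟨⟨0, hm0⟩⟩
  set c : ℝ := 2 * Real.sqrt m + 2 with hc
  have hsqm : (0:ℝ) ≤ Real.sqrt m := Real.sqrt_nonneg _
  have hc0 : 0 < c := by positivity
  have hsq : Real.sqrt m ≤ c / 2 := by rw [hc]; linarith
  set K0 : ℝ := (5 * c / 4) ^ (n0 : ℝ) with hK0def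
  have hK0 : 0 < K0 := Real.rpow_pos_of_pos (by linarith) _
  set h : ℕ → ℝ := fun j => if j = 0 then 0 else 3 ^ m * (j : ℝ) ^ (-(2:ℝ)) with hh
  have hhnonneg : ∀ j, 0 ≤ h j := by
    intro j; rw [hh]; dsimp only; split
    · norm_num
    · positivity
  have hhsummable : Summable h := by
    have hbase : Summable (fun j : ℕ => (3:ℝ) ^ m * (j : ℝ) ^ (-(2:ℝ))) :=
      (Real.summable_nat_rpow.mpr (by norm_num)).mul_left _
    refine hbase.of_nonneg_of_le hhnonneg fun j => ?_
    rw [hh]; dsimp only; split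
    · positivity
    · exact le_rfl
  have hT0 : 0 ≤ ∑' j, h j := tsum_nonneg hhnonneg
  refine ⟨K0 * (∑' j, h j) + 1, by positivity, fun α u h1 hsep => ?_⟩
  set e : α → Fin m → ℤ := fun a i => round (c * u a i) with he
  set E : α → EuclideanSpace ℝ (Fin m) := fun a => WithLp.toLp 2 (fun i => ((e a i : ℝ))) with hE
  have hEapp : ∀ a i, E a i = (e a i : ℝ) := fun a i => rfl
  have herr : ∀ a, ‖c • u a - E a‖ ≤ c / 4 := by
    intro a
    rw [EuclideanSpace.norm_eq]
    have hb : ∀ i : Fin m, ‖(c • u a - E a) i‖ ^ 2 ≤ (1/2:ℝ)^2 := by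
      intro i
      have hcoord : (c • u a - E a) i = c * u a i - (round (c * u a i) : ℝ) := by
        simp [hE, he, smul_eq_mul]
      rw [hcoord, Real.norm_eq_abs, sq_abs]
      have habs := abs_sub_round (c * u a i)
      have h0 : |c * u a i - (round (c * u a i) : ℝ)| ≤ 1/2 := habs
      exact sq_le_sq' (by linarith [(abs_le.mp h0).1]) (abs_le.mp h0).2
    have hsum : (∑ i : Fin m, ‖(c • u a - E a) i‖ ^ 2) ≤ (m : ℝ) * (1/2)^2 := by
      calc (∑ i : Fin m, ‖(c • u a - E a) i‖ ^ 2) ≤ ∑ _i : Fin m, (1/2:ℝ)^2 :=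
            Finset.sum_le_sum fun i _ => hb i
        _ = (m:ℝ) * (1/2)^2 := by simp [mul_comm]
    calc Real.sqrt (∑ i, ‖(c • u a - E a) i‖ ^ 2) ≤ Real.sqrt ((m:ℝ) * (1/2)^2) :=
          Real.sqrt_le_sqrt hsum
      _ = Real.sqrt m * (1/2) := by
          rw [Real.sqrt_mul (Nat.cast_nonneg m), Real.sqrt_sq (by norm_num)]
      _ ≤ (c/2) * (1/2) := by nlinarith
      _ = c / 4 := by ring
  have hupper : ∀ a, ‖E a‖ ≤ 5 * c / 4 * ‖u a‖ := by
    intro a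
    have : ‖E a‖ ≤ ‖c • u a‖ + ‖c • u a - E a‖ := by
      have := norm_sub_le (c • u a) (c • u a - E a)
      simpa using this
    have hn : ‖c • u a‖ = c * ‖u a‖ := by
      rw [norm_smul, Real.norm_eq_abs, abs_of_pos hc0]
    have h1a := h1 a
    have := herr a
    nlinarith
  have hlowerE : ∀ a, 3 * c / 4 ≤ ‖E a‖ := by
    intro a
    have hns : ‖c • u a‖ - ‖E a‖ ≤ ‖c • u a - E a‖ := norm_sub_norm_le _ _
    have hn : ‖c • u a‖ = c * ‖u a‖ := by
      rw [norm_smul, Real.norm_eq_abs, abs_of_pos hc0]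
    have h1a := h1 a
    have := herr a
    nlinarith
  have hinj : Function.Injective e := by
    intro a b hab
    by_contra hne
    have h2 := hsep a b hne
    have hEeq : E a = E b := by
      rw [hE]; dsimp only; rw [hab]
    have hkey : ‖c • u a - c • u b‖ ≤ c/2 := by
      have : c • u a - c • u b = (c • u a - E a) - (c • u b - E b) := by
        rw [hEeq]; abel
      rw [this]
      calc ‖(c • u a - E a) - (c • u b - E b)‖ ≤ ‖c • u a - E a‖ + ‖c • u b - E b‖ :=
            norm_sub_le _ _
        _ ≤ c/4 + c/4 := add_le_add (herr a) (herr b)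
        _ = c/2 := by ring
    rw [← smul_sub, norm_smul, Real.norm_eq_abs, abs_of_pos hc0] at hkey
    nlinarith
  set g : (Fin m → ℤ) → ℕ := fun z => univ.sup fun i => (z i).natAbs with hg
  have hcoord : ∀ a (i : Fin m), |E a i| ≤ ‖E a‖ := by
    intro a i
    rw [EuclideanSpace.norm_eq]
    have h1' : (E a i)^2 ≤ ∑ j, ‖E a j‖^2 := by
      have := Finset.single_le_sum (f := fun j => ‖E a j‖^2)
        (fun j _ => sq_nonneg _) (Finset.mem_univ i)
      simpa [Real.norm_eq_abs, sq_abs] using this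
    calc |E a i| = Real.sqrt ((E a i)^2) := (Real.sqrt_sq_eq_abs _).symm
      _ ≤ _ := Real.sqrt_le_sqrt h1'
  have hgle : ∀ a, (g (e a) : ℝ) ≤ ‖E a‖ := by
    intro a
    obtain ⟨i, _, hi⟩ := Finset.exists_mem_eq_sup univ univ_nonempty
      (fun i => (e a i).natAbs)
    rw [hg]; dsimp only; rw [hi]
    have : ((e a i).natAbs : ℝ) = |((e a i : ℤ) : ℝ)| := by
      rw [Nat.cast_natAbs]; push_cast; ring
    rw [this]
    have := hcoord a i
    rwa [hEapp] at this
  have hg1 : ∀ a, 1 ≤ g (e a) := by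
    intro a
    by_contra h'
    push_neg at h'
    have hz : g (e a) = 0 := by omega
    have hall : ∀ i, e a i = 0 := by
      intro i
      have hle : (e a i).natAbs ≤ g (e a) :=
        Finset.le_sup (f := fun i => (e a i).natAbs) (Finset.mem_univ i)
      omega
    have hEnorm : ‖E a‖ = 0 := by
      rw [EuclideanSpace.norm_eq]
      have : ∀ i : Fin m, ‖E a i‖ ^ 2 = 0 := by
        intro i; rw [hEapp, hall i]; simp
      simp only [this]; simp
    have := hlowerE a
    rw [hEnorm] at this
    nlinarith
  have hterm : ∀ a, ‖u a‖ ^ (-(n0:ℝ)) ≤ K0 * ((g (e a) : ℝ)) ^ (-(n0:ℝ)) := by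
    intro a
    have hga : (0:ℝ) < (g (e a) : ℝ) := by exact_mod_cast hg1 a
    have hdenom : (0:ℝ) < 5 * c / 4 := by linarith
    have h2 : ((g (e a) : ℝ)) / (5*c/4) ≤ ‖u a‖ := by
      rw [div_le_iff₀ hdenom]
      calc ((g (e a):ℝ)) ≤ ‖E a‖ := hgle a
        _ ≤ 5 * c / 4 * ‖u a‖ := hupper a
        _ = ‖u a‖ * (5*c/4) := by ring
    have hpos : (0:ℝ) < ((g (e a):ℝ)) / (5*c/4) := by positivity
    have h3 := Real.rpow_le_rpow_of_nonpos hpos h2 (by simp : -(n0:ℝ) ≤ 0)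
    calc ‖u a‖ ^ (-(n0:ℝ)) ≤ (((g (e a):ℝ)) / (5*c/4)) ^ (-(n0:ℝ)) := h3
      _ = K0 * ((g (e a):ℝ)) ^ (-(n0:ℝ)) := by
          rw [Real.div_rpow hga.le hdenom.le, Real.rpow_neg hdenom.le, hK0def,
            div_eq_mul_inv, inv_inv]
          ring
  have hsum : ∀ S : Finset α, ∑ a ∈ S, ‖u a‖ ^ (-(n0:ℝ)) ≤ K0 * (∑' j, h j) := by
    intro S
    have step1 : ∑ a ∈ S, ‖u a‖ ^ (-(n0:ℝ)) ≤ K0 * ∑ a ∈ S, ((g (e a):ℝ)) ^ (-(n0:ℝ)) := by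
      rw [Finset.mul_sum]
      exact Finset.sum_le_sum fun a _ => hterm a
    have step2 : ∑ a ∈ S, ((g (e a):ℝ)) ^ (-(n0:ℝ))
        = ∑ z ∈ S.image e, ((g z:ℝ)) ^ (-(n0:ℝ)) := by
      rw [Finset.sum_image (fun a _ b _ hab => hinj hab)]
    set T := S.image e with hT
    have hTg : ∀ z ∈ T, 1 ≤ g z := by
      intro z hz
      obtain ⟨a, _, rfl⟩ := Finset.mem_image.mp hz
      exact hg1 a
    have step3 : ∑ z ∈ T, ((g z:ℝ)) ^ (-(n0:ℝ)) ≤ ∑' j, h j := by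
      have hfib : ∑ j ∈ T.image g, ∑ z ∈ T.filter (fun z => g z = j), ((g z:ℝ)) ^ (-(n0:ℝ))
          = ∑ z ∈ T, ((g z:ℝ)) ^ (-(n0:ℝ)) :=
        Finset.sum_fiberwise_of_maps_to (fun z hz => Finset.mem_image_of_mem g hz) _
      rw [← hfib]
      have hinner : ∀ j ∈ T.image g, ∑ z ∈ T.filter (fun z => g z = j), ((g z:ℝ)) ^ (-(n0:ℝ)) ≤ h j := by
        intro j hj
        obtain ⟨z0, hz0, rfl⟩ := Finset.mem_image.mp hj
        set j := g z0
        have hj1 : 1 ≤ j := hTg z0 hz0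
        have hjR : (1:ℝ) ≤ (j:ℝ) := by exact_mod_cast hj1
        have hcardle : (T.filter (fun z => g z = j)).card ≤ (2*j+1)^m := by
          have hsub : T.filter (fun z => g z = j) ⊆
              Fintype.piFinset (fun _ : Fin m => Finset.Icc (-(j:ℤ)) (j:ℤ)) := by
            intro z hz
            obtain ⟨hzT, hzj⟩ := Finset.mem_filter.mp hz
            rw [Fintype.mem_piFinset]
            intro i
            rw [Finset.mem_Icc]
            have : (z i).natAbs ≤ g z :=
              Finset.le_sup (f := fun i => (z i).natAbs) (Finset.mem_univ i)
            rw [hzj] at this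
            omega
          calc (T.filter (fun z => g z = j)).card
              ≤ (Fintype.piFinset (fun _ : Fin m => Finset.Icc (-(j:ℤ)) (j:ℤ))).card :=
                Finset.card_le_card hsub
            _ = (2*j+1)^m := by
                rw [Fintype.card_piFinset]
                have hcI : (Finset.Icc (-(j:ℤ)) (j:ℤ)).card = 2*j+1 := by
                  rw [Int.card_Icc]
                  omega
                simp [hcI]
        have hval : ∑ z ∈ T.filter (fun z => g z = j), ((g z:ℝ)) ^ (-(n0:ℝ))
            = (T.filter (fun z => g z = j)).card * ((j:ℝ)) ^ (-(n0:ℝ)) := by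
          rw [Finset.sum_congr rfl (fun z hz => by
            rw [(Finset.mem_filter.mp hz).2])]
          rw [Finset.sum_const, nsmul_eq_mul]
        rw [hval, hh]
        have hjne : j ≠ 0 := by omega
        simp only [hjne, if_false]
        have hrpos : (0:ℝ) < ((j:ℝ)) ^ (-(n0:ℝ)) := Real.rpow_pos_of_pos (by linarith) _
        calc ((T.filter (fun z => g z = j)).card : ℝ) * ((j:ℝ)) ^ (-(n0:ℝ))
            ≤ ((2*j+1:ℕ)^m : ℝ) * ((j:ℝ)) ^ (-(n0:ℝ)) := by
              apply mul_le_mul_of_nonneg_right _ hrpos.le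
              exact_mod_cast hcardle
          _ ≤ ((3*(j:ℝ))^m) * ((j:ℝ)) ^ (-(n0:ℝ)) := by
              apply mul_le_mul_of_nonneg_right _ hrpos.le
              apply pow_le_pow_left₀ (by positivity)
              push_cast; linarith
          _ = 3^m * ((j:ℝ)^m * ((j:ℝ)) ^ (-(n0:ℝ))) := by rw [mul_pow]; ring
          _ ≤ 3^m * ((j:ℝ)) ^ (-(2:ℝ)) := by
              apply mul_le_mul_of_nonneg_left _ (by positivity)
              rw [← Real.rpow_natCast (j:ℝ) m, ← Real.rpow_add (by linarith)]
              apply Real.rpow_le_rpow_of_exponent_le hjR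
              have : (m:ℝ) + 2 ≤ (n0:ℝ) := by exact_mod_cast hmn
              linarith
      calc ∑ j ∈ T.image g, ∑ z ∈ T.filter (fun z => g z = j), ((g z:ℝ)) ^ (-(n0:ℝ))
          ≤ ∑ j ∈ T.image g, h j := Finset.sum_le_sum hinner
        _ ≤ ∑' j, h j := Summable.sum_le_tsum _ (fun j _ => hhnonneg j) hhsummable
    calc ∑ a ∈ S, ‖u a‖ ^ (-(n0:ℝ)) ≤ K0 * ∑ a ∈ S, ((g (e a):ℝ)) ^ (-(n0:ℝ)) := step1
      _ = K0 * ∑ z ∈ T, ((g z:ℝ)) ^ (-(n0:ℝ)) := by rw [step2]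
      _ ≤ K0 * (∑' j, h j) := mul_le_mul_of_nonneg_left step3 hK0.le
  have hsummable : Summable (fun a : α => ‖u a‖ ^ (-(n0:ℝ))) :=
    summable_of_sum_le (fun a => Real.rpow_nonneg (norm_nonneg _) _) hsum
  refine ⟨hsummable, ?_⟩
  have := Summable.tsum_le_of_sum_le hsummable hsum
  linarith


open NumberField

lemma prod_abs_embeddings (F : Type) [Field F] [NumberField F] (x : F) :
    ∏ φ : F →+* ℂ, ‖φ x‖ = |((Algebra.norm ℚ x : ℚ) : ℝ)| := by
  have h := Algebra.norm_eq_prod_embeddings ℚ ℂ (x := x)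
  have h2 : ‖(algebraMap ℚ ℂ) (Algebra.norm ℚ x)‖
      = ∏ σ : F →ₐ[ℚ] ℂ, ‖σ x‖ := by
    rw [h, norm_prod]
  rw [Fintype.prod_equiv (RingHom.equivRatAlgHom F ℂ)
    (fun φ : F →+* ℂ => ‖φ x‖) (fun σ : F →ₐ[ℚ] ℂ => ‖σ x‖)
    (fun φ => rfl)]
  rw [← h2, eq_ratCast (algebraMap ℚ ℂ)]
  rw [show ((Algebra.norm ℚ x : ℚ) : ℂ) = (((Algebra.norm ℚ x : ℚ) : ℝ) : ℂ) by push_cast; rfl]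
  rw [Complex.norm_real, Real.norm_eq_abs]

lemma exists_embedding_one_le (F : Type) [Field F] [NumberField F] (Y : 𝓞 F)
    (hY : Y ≠ 0) : ∃ φ : F →+* ℂ, 1 ≤ ‖φ (algebraMap (𝓞 F) F Y)‖ := by
  classical
  have hnz : (algebraMap (𝓞 F) F Y) ≠ 0 := by
    simpa using (map_ne_zero_iff _ NumberField.RingOfIntegers.coe_injective).mpr hY
  have hnorm0 : Algebra.norm ℚ (algebraMap (𝓞 F) F Y) ≠ 0 := by
    rw [Algebra.norm_ne_zero_iff]
    exact hnz
  have h1 : (1:ℝ) ≤ |((Algebra.norm ℚ (algebraMap (𝓞 F) F Y) : ℚ) : ℝ)| := by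
    have := Algebra.coe_norm_int Y
    rw [← this]
    have hz : Algebra.norm ℤ Y ≠ 0 := by
      intro h0
      rw [← this] at hnorm0
      exact hnorm0 (by rw [h0]; simp)
    have : (1:ℤ) ≤ |Algebra.norm ℤ Y| := Int.one_le_abs hz
    calc (1:ℝ) ≤ (|Algebra.norm ℤ Y| : ℝ) := by exact_mod_cast this
      _ = |((( Algebra.norm ℤ Y : ℤ) : ℚ) : ℝ)| := by push_cast; ring
  by_contra hcon
  push_neg at hcon
  have hne : Nonempty (F →+* ℂ) := by
    have hcard : 0 < Fintype.card (F →+* ℂ) := by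
      rw [NumberField.Embeddings.card F ℂ]
      exact Module.finrank_pos
    exact Fintype.card_pos_iff.mp hcard
  obtain ⟨φ0⟩ := hne
  have hprod := prod_abs_embeddings F (algebraMap (𝓞 F) F Y)
  have hlt : ∏ φ : F →+* ℂ, ‖φ (algebraMap (𝓞 F) F Y)‖ < 1 := by
    have hsplit := Finset.mul_prod_erase Finset.univ
      (fun φ : F →+* ℂ => ‖φ (algebraMap (𝓞 F) F Y)‖) (Finset.mem_univ φ0)
    rw [← hsplit]
    have hrest : ∏ φ ∈ Finset.univ.erase φ0, ‖φ (algebraMap (𝓞 F) F Y)‖ ≤ 1 :=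
      Finset.prod_le_one (fun φ _ => norm_nonneg _) (fun φ _ => (hcon φ).le)
    have h0 : 0 ≤ ‖φ0 (algebraMap (𝓞 F) F Y)‖ := norm_nonneg _
    calc ‖φ0 (algebraMap (𝓞 F) F Y)‖ *
          ∏ φ ∈ Finset.univ.erase φ0, ‖φ (algebraMap (𝓞 F) F Y)‖
        ≤ ‖φ0 (algebraMap (𝓞 F) F Y)‖ * 1 := by
          exact mul_le_mul_of_nonneg_left hrest h0
      _ < 1 := by rw [mul_one]; exact hcon φ0
  rw [hprod] at hlt
  linarith

open NumberField

noncomputable def embMap (F : Type) [Field F] [NumberField F] (Knum : ℕ) :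
    (Fin Knum → F) →ₗ[ℚ] EuclideanSpace ℝ (Fin Knum × (F →+* ℂ) × Fin 2) where
  toFun := fun X => (WithLp.equiv 2 _).symm
    (fun p => if p.2.2 = 0 then (p.2.1 (X p.1)).re else (p.2.1 (X p.1)).im)
  map_add' := by
    intro X Y
    ext p
    simp only [WithLp.equiv_symm_apply, WithLp.ofLp_toLp, PiLp.add_apply, Pi.add_apply, map_add]
    by_cases hp : p.2.2 = 0 <;> simp [hp]
  map_smul' := by
    intro q X
    ext p
    have hφ : p.2.1 ((q • X) p.1) = (q : ℂ) * p.2.1 (X p.1) := by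
      rw [Pi.smul_apply, Rat.smul_def, map_mul, map_ratCast]
    simp only [WithLp.equiv_symm_apply, WithLp.ofLp_toLp, PiLp.smul_apply, RingHom.id_apply, hφ]
    have hre : ((q:ℂ)).re = (q:ℝ) := by simp
    have him : ((q:ℂ)).im = 0 := by simp
    by_cases hp : p.2.2 = 0 <;>
      simp [hp, Complex.mul_re, Complex.mul_im, hre, him, Rat.smul_def]

lemma embMap_norm (F : Type) [Field F] [NumberField F] (Knum : ℕ) (X : Fin Knum → F) :
    ‖embMap F Knum X‖ = Real.sqrt (∑ k : Fin Knum, ∑ φ : F →+* ℂ,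
      ‖φ (X k)‖ ^ 2) := by
  rw [EuclideanSpace.norm_eq]
  congr 1
  rw [Fintype.sum_prod_type]
  refine Finset.sum_congr rfl fun k _ => ?_
  rw [Fintype.sum_prod_type]
  refine Finset.sum_congr rfl fun φ _ => ?_
  rw [Fin.sum_univ_two]
  have h0 : (embMap F Knum X) (k, φ, 0) = (φ (X k)).re := rfl
  have h1 : (embMap F Knum X) (k, φ, 1) = (φ (X k)).im := rfl
  rw [h0, h1, Real.norm_eq_abs, Real.norm_eq_abs, sq_abs, sq_abs, Complex.sq_norm,
    Complex.normSq_apply]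
  ring

open scoped nonZeroDivisors

set_option maxHeartbeats 2000000 in
/-- Let `F` be a number field of degree `d`, `K ≥ 1` and `q ≥ 0` integers, `b ⊆ O_F` an
ideal of norm at most `√D_F`, and `a = b^q`.  Then for all `t ≥ 2`,
`Σ_{0 ≠ X ∈ (a^{-1})^K} ‖X‖^{-dK-t} ≪_{d,K} D_F^{(dK+t)q}`, where `a^{-1}` is the inverse
fractional ideal viewed inside `ℝ^{dK}` via the canonical embedding `x ↦ (φ(x))_φ`, with
`‖X‖² = Σ_k Σ_φ |φ(X_k)|²`. -/
theorem stmt_17 (d Knum : ℕ) (hd : 1 ≤ d) (hK : 1 ≤ Knum) :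
    ∃ C > (0 : ℝ), ∀ (F : Type) [Field F] [NumberField F], Module.finrank ℚ F = d →
      ∀ b : Ideal (𝓞 F), b ≠ ⊥ →
        (Ideal.absNorm b : ℝ) ≤ Real.sqrt |(NumberField.discr F : ℝ)| →
        ∀ q : ℕ, ∀ t : ℝ, 2 ≤ t →
          ∑' X : {X : Fin Knum → F //
              (∀ k, X k ∈ (((b ^ q : Ideal (𝓞 F)) : FractionalIdeal (𝓞 F)⁰ F))⁻¹) ∧ X ≠ 0},
            (Real.sqrt (∑ k : Fin Knum, ∑ φ : F →+* ℂ, ‖φ ((X : Fin Knum → F) k)‖ ^ 2))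
              ^ (-((d * Knum : ℝ) + t))
            ≤ C * |(NumberField.discr F : ℝ)| ^ (((d * Knum : ℝ) + t) * q) := by
  classical
  set n := d * Knum with hn
  have hn1 : 1 ≤ n := by
    calc 1 = 1 * 1 := by norm_num
      _ ≤ d * Knum := Nat.mul_le_mul hd hK
  set n0 := n + 2 with hn0
  set Cfun : ℕ → ℝ := fun m' => if h : m' + 2 ≤ n0 then (sep_core m' n0 h).choose else 1
    with hCfun
  have hCfun_pos : ∀ m', 0 < Cfun m' := by
    intro m'; rw [hCfun]; dsimp only; split
    · next hle => exact (sep_core m' n0 hle).choose_spec.1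
    · norm_num
  have hCfun_spec : ∀ m' (hle : m' + 2 ≤ n0), ∀ (α : Type)
      (u : α → EuclideanSpace ℝ (Fin m')),
      (∀ a, 1 ≤ ‖u a‖) → (∀ a b : α, a ≠ b → 1 ≤ ‖u a - u b‖) →
      Summable (fun a => ‖u a‖ ^ (-(n0 : ℝ))) ∧ ∑' a, ‖u a‖ ^ (-(n0 : ℝ)) ≤ Cfun m' := by
    intro m' hle
    have hspec := (sep_core m' n0 hle).choose_spec.2
    rw [hCfun]; dsimp only; rw [dif_pos hle]
    exact hspec
  set C := ∑ m' ∈ Finset.range (n+1), Cfun m' with hC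
  have hCpos : 0 < C :=
    Finset.sum_pos (fun i _ => hCfun_pos i) ⟨0, Finset.mem_range.mpr (by omega)⟩
  have hCge : ∀ m' ≤ n, Cfun m' ≤ C := fun m' hm' =>
    Finset.single_le_sum (f := Cfun) (fun i _ => (hCfun_pos i).le)
      (Finset.mem_range.mpr (by omega))
  refine ⟨C, hCpos, ?_⟩
  intro F _ _ hdeg b hb hbn q t ht
  set D := |(NumberField.discr F : ℝ)| with hD
  have hD0 : (0:ℝ) ≤ D := abs_nonneg _
  have hD1 : 1 ≤ D := by
    have h0 : (NumberField.discr F) ≠ 0 := NumberField.discr_ne_zero F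
    have h1 : (1:ℤ) ≤ |NumberField.discr F| := Int.one_le_abs h0
    rw [hD]
    calc (1:ℝ) ≤ (|NumberField.discr F| : ℝ) := by exact_mod_cast h1
      _ = |((NumberField.discr F : ℤ) : ℝ)| := by push_cast; ring
  set s : ℝ := (d:ℝ) * (Knum:ℝ) + t with hs
  have hsn : ((n:ℝ)) = (d:ℝ) * (Knum:ℝ) := by rw [hn]; push_cast; ring
  have hs2 : (n0:ℝ) ≤ s := by
    rw [hs, hn0]
    push_cast
    rw [← hsn]
    push_cast
    linarith
  have hs0 : 0 < s := by
    rw [hs]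
    have : (1:ℝ) ≤ (d:ℝ) * (Knum:ℝ) := by
      rw [← hsn]; exact_mod_cast hn1
    linarith
  set Nb := Ideal.absNorm b with hNbdef
  have hNb1 : 1 ≤ Nb := by
    rcases Nat.eq_zero_or_pos Nb with h0 | h0
    · exact absurd (Ideal.absNorm_eq_zero_iff.mp h0) hb
    · omega
  set N : ℕ := Nb ^ q with hNdef
  have hN1 : 1 ≤ N := Nat.one_le_pow _ _ (by omega)
  have hNR : (1:ℝ) ≤ (N:ℝ) := by exact_mod_cast hN1
  set r : ℝ := ((N:ℝ))⁻¹ with hrdef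
  have hr0 : 0 < r := by positivity
  set I : FractionalIdeal (𝓞 F)⁰ F := ((b^q : Ideal (𝓞 F)) : FractionalIdeal (𝓞 F)⁰ F)
    with hI
  have hbq : (b^q : Ideal (𝓞 F)) ≠ ⊥ := by
    rw [← Submodule.zero_eq_bot]
    exact pow_ne_zero q (by rwa [Submodule.zero_eq_bot])
  have hI0 : I ≠ 0 := by
    rw [hI, ne_eq, FractionalIdeal.coeIdeal_eq_zero]
    exact hbq
  have hNmem : ∀ x : F, x ∈ I⁻¹ → ∃ Y : 𝓞 F, algebraMap (𝓞 F) F Y = (N : F) * x := by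
    intro x hx
    have h1 : ((N : 𝓞 F)) ∈ b^q := by
      have h2 := Ideal.pow_mem_pow (Ideal.absNorm_mem b) q
      have h3 : ((N : ℕ) : 𝓞 F) = ((Nb : 𝓞 F))^q := by rw [hNdef]; push_cast; ring
      rwa [h3]
    have h3 : (algebraMap (𝓞 F) F) ((N : 𝓞 F)) ∈ I := by
      rw [hI]
      exact FractionalIdeal.mem_coeIdeal_of_mem _ h1
    have h4 := (FractionalIdeal.mem_inv_iff hI0).mp hx _ h3
    obtain ⟨Y, hY⟩ := (FractionalIdeal.mem_one_iff _).mp h4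
    refine ⟨Y, ?_⟩
    rw [hY, map_natCast, mul_comm]
  have hlow : ∀ x : F, x ∈ I⁻¹ → x ≠ 0 → ∃ φ : F →+* ℂ, r ≤ ‖φ x‖ := by
    intro x hx hx0
    obtain ⟨Y, hY⟩ := hNmem x hx
    have hNF : ((N : ℕ) : F) ≠ 0 := Nat.cast_ne_zero.mpr (by omega)
    have hY0 : Y ≠ 0 := by
      intro h0
      rw [h0, map_zero] at hY
      rcases mul_eq_zero.mp hY.symm with h | h
      · exact hNF h
      · exact hx0 h
    obtain ⟨φ, hφ⟩ := exists_embedding_one_le F Y hY0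
    refine ⟨φ, ?_⟩
    rw [hY, map_mul, map_natCast, norm_mul, Complex.norm_natCast] at hφ
    have hA : 0 ≤ ‖φ x‖ := norm_nonneg _
    have hNpos : (0:ℝ) < (N:ℝ) := by linarith
    have h5 := mul_le_mul_of_nonneg_left hφ (le_of_lt (inv_pos.mpr hNpos))
    rw [mul_one] at h5
    rw [hrdef]
    calc (N:ℝ)⁻¹ ≤ (N:ℝ)⁻¹ * ((N:ℝ) * ‖φ x‖) := h5
      _ = ‖φ x‖ := by field_simp
  set L := embMap F Knum with hL
  have hnrm_ge : ∀ (X : Fin Knum → F), (∀ k, X k ∈ I⁻¹) → X ≠ 0 → r ≤ ‖L X‖ := by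
    intro X hX hX0
    obtain ⟨k, hk⟩ := Function.ne_iff.mp hX0
    obtain ⟨φ0, hφ0⟩ := hlow (X k) (hX k) hk
    rw [hL, embMap_norm]
    have h1 : ‖φ0 (X k)‖ ^ 2 ≤ ∑ φ : F →+* ℂ, ‖φ (X k)‖ ^ 2 :=
      Finset.single_le_sum (f := fun φ : F →+* ℂ => ‖φ (X k)‖ ^ 2)
        (fun φ _ => sq_nonneg _) (Finset.mem_univ φ0)
    have h2 : ∑ φ : F →+* ℂ, ‖φ (X k)‖ ^ 2
        ≤ ∑ k' : Fin Knum, ∑ φ : F →+* ℂ, ‖φ (X k')‖ ^ 2 :=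
      Finset.single_le_sum (f := fun k' => ∑ φ : F →+* ℂ, ‖φ (X k')‖ ^ 2)
        (fun k' _ => Finset.sum_nonneg fun φ _ => sq_nonneg _) (Finset.mem_univ k)
    calc r ≤ ‖φ0 (X k)‖ := hφ0
      _ = Real.sqrt (‖φ0 (X k)‖ ^ 2) :=
          (Real.sqrt_sq (norm_nonneg _)).symm
      _ ≤ Real.sqrt (∑ k' : Fin Knum, ∑ φ : F →+* ℂ, ‖φ (X k')‖ ^ 2) :=
          Real.sqrt_le_sqrt (by linarith)
  set V : Submodule ℝ (EuclideanSpace ℝ (Fin Knum × (F →+* ℂ) × Fin 2)) :=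
    Submodule.span ℝ (Set.range L) with hV
  have hVd : Module.finrank ℝ V ≤ n := by
    set BQ := Module.finBasis ℚ (Fin Knum → F) with hBQ
    have hsub : V ≤ Submodule.span ℝ (Set.range (fun i => L (BQ i))) := by
      rw [hV, Submodule.span_le]
      rintro _ ⟨X, rfl⟩
      have hXrepr : L X = ∑ i, (BQ.repr X i) • L (BQ i) := by
        conv_lhs => rw [← BQ.sum_repr X]
        rw [map_sum]
        simp_rw [map_smul]
      rw [hXrepr]
      refine Submodule.sum_mem _ fun i _ => ?_
      have hq : (BQ.repr X i) • L (BQ i) = ((BQ.repr X i : ℝ)) • L (BQ i) := by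
        rw [← algebraMap_smul (R := ℚ) ℝ (BQ.repr X i) (L (BQ i)), eq_ratCast]
      rw [hq]
      exact Submodule.smul_mem _ _ (Submodule.subset_span ⟨i, rfl⟩)
    have hcard : Module.finrank ℚ (Fin Knum → F) = n := by
      rw [Module.finrank_pi_fintype]
      simp [hdeg, hn, Nat.mul_comm]
    have hle2 := Submodule.finrank_mono hsub
    have hle3 := finrank_range_le_card (R := ℝ) (fun i => L (BQ i))
    calc Module.finrank ℝ V
        ≤ Module.finrank ℝ (Submodule.span ℝ (Set.range (fun i => L (BQ i)))) := hle2
      _ ≤ Fintype.card (Fin (Module.finrank ℚ (Fin Knum → F))) := hle3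
      _ = n := by rw [Fintype.card_fin, hcard]
  set m := Module.finrank ℝ V with hm
  have hmn : m ≤ n := hVd
  set OB := stdOrthonormalBasis ℝ V with hOB
  have hmemV : ∀ (X : Fin Knum → F), r⁻¹ • L X ∈ V :=
    fun X => Submodule.smul_mem _ _ (Submodule.subset_span ⟨X, rfl⟩)
  set u : {X : Fin Knum → F // (∀ k, X k ∈ I⁻¹) ∧ X ≠ 0} → EuclideanSpace ℝ (Fin m) :=
    fun a => OB.repr ⟨r⁻¹ • L a.1, hmemV a.1⟩ with hu
  have hunorm : ∀ a, ‖u a‖ = r⁻¹ * ‖L a.1‖ := by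
    intro a
    rw [hu]
    dsimp only
    rw [LinearIsometryEquiv.norm_map]
    have hns : ‖(⟨r⁻¹ • L a.1, hmemV a.1⟩ : V)‖ = ‖r⁻¹ • L a.1‖ := rfl
    rw [hns, norm_smul, Real.norm_eq_abs, abs_of_pos (by positivity)]
  have hge1 : ∀ a, 1 ≤ ‖u a‖ := by
    intro a
    rw [hunorm a]
    have h2 := hnrm_ge a.1 a.2.1 a.2.2
    calc (1:ℝ) = r⁻¹ * r := by field_simp
      _ ≤ r⁻¹ * ‖L a.1‖ := mul_le_mul_of_nonneg_left h2 (by positivity)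
  have hsepu : ∀ a b', a ≠ b' → 1 ≤ ‖u a - u b'‖ := by
    intro a b' hne
    have hXne : a.1 - b'.1 ≠ 0 := sub_ne_zero.mpr (fun h => hne (Subtype.ext h))
    have hXmem : ∀ k, (a.1 - b'.1) k ∈ I⁻¹ := by
      intro k
      have h1 := a.2.1 k
      have h2 := b'.2.1 k
      rw [← FractionalIdeal.mem_coe] at h1 h2 ⊢
      rw [Pi.sub_apply]
      exact sub_mem h1 h2
    have h2 := hnrm_ge _ hXmem hXne
    have husub : u a - u b' = OB.repr ⟨r⁻¹ • L (a.1 - b'.1), hmemV _⟩ := by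
      rw [hu]
      dsimp only
      rw [← LinearIsometryEquiv.map_sub]
      congr 1
      apply Subtype.ext
      show r⁻¹ • L a.1 - r⁻¹ • L b'.1 = r⁻¹ • L (a.1 - b'.1)
      rw [map_sub, smul_sub]
    rw [husub, LinearIsometryEquiv.norm_map]
    have hns : ‖(⟨r⁻¹ • L (a.1 - b'.1), hmemV _⟩ : V)‖ = ‖r⁻¹ • L (a.1 - b'.1)‖ := rfl
    rw [hns, norm_smul, Real.norm_eq_abs, abs_of_pos (by positivity)]
    calc (1:ℝ) = r⁻¹ * r := by field_simp
      _ ≤ r⁻¹ * ‖L (a.1 - b'.1)‖ := mul_le_mul_of_nonneg_left h2 (by positivity)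
  obtain ⟨hsml, htsm⟩ := hCfun_spec m (by omega) _ u hge1 hsepu
  have hterm : ∀ a, ‖u a‖ ^ (-s) ≤ ‖u a‖ ^ (-(n0:ℝ)) := fun a =>
    Real.rpow_le_rpow_of_exponent_le (hge1 a) (by linarith)
  have hsml_s : Summable (fun a => ‖u a‖ ^ (-s)) :=
    hsml.of_nonneg_of_le (fun a => Real.rpow_nonneg (norm_nonneg _) _) hterm
  have htsm_s : ∑' a, ‖u a‖ ^ (-s) ≤ Cfun m :=
    le_trans (Summable.tsum_le_tsum hterm hsml_s hsml) htsm
  have hsqrt : ∀ a : {X : Fin Knum → F // (∀ k, X k ∈ I⁻¹) ∧ X ≠ 0},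
      Real.sqrt (∑ k : Fin Knum, ∑ φ : F →+* ℂ, ‖φ (a.1 k)‖ ^ 2)
        = r * ‖u a‖ := by
    intro a
    rw [hunorm a]
    calc Real.sqrt (∑ k : Fin Knum, ∑ φ : F →+* ℂ, ‖φ (a.1 k)‖ ^ 2)
        = ‖L a.1‖ := by rw [hL, embMap_norm]
      _ = r * (r⁻¹ * ‖L a.1‖) := by field_simp
  have hr_eq : r ^ (-s) = (N:ℝ) ^ s := by
    rw [hrdef, Real.inv_rpow (by positivity), Real.rpow_neg (by positivity), inv_inv]
  have hNle : (N:ℝ) ≤ Real.sqrt D ^ q := by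
    rw [hNdef]
    push_cast
    exact pow_le_pow_left₀ (Nat.cast_nonneg _) hbn q
  have h1 : r ^ (-s) ≤ D ^ (s * (q:ℝ)) := by
    rw [hr_eq]
    calc (N:ℝ) ^ s ≤ (Real.sqrt D ^ q) ^ s :=
        Real.rpow_le_rpow (by positivity) hNle (le_of_lt hs0)
      _ = D ^ ((1/2) * ((q:ℝ) * s)) := by
          rw [← Real.rpow_natCast (Real.sqrt D) q, ← Real.rpow_mul (Real.sqrt_nonneg _),
            Real.sqrt_eq_rpow, ← Real.rpow_mul hD0]
      _ ≤ D ^ (s * (q:ℝ)) := by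
          apply Real.rpow_le_rpow_of_exponent_le hD1
          nlinarith [mul_nonneg (Nat.cast_nonneg q : (0:ℝ) ≤ (q:ℝ)) hs0.le]
  have hfinal :
      ∑' a : {X : Fin Knum → F // (∀ k, X k ∈ I⁻¹) ∧ X ≠ 0},
        (Real.sqrt (∑ k : Fin Knum, ∑ φ : F →+* ℂ, ‖φ (a.1 k)‖ ^ 2)) ^ (-s)
        ≤ C * D ^ (s * (q:ℝ)) := by
    calc ∑' a : {X : Fin Knum → F // (∀ k, X k ∈ I⁻¹) ∧ X ≠ 0},
          (Real.sqrt (∑ k : Fin Knum, ∑ φ : F →+* ℂ, ‖φ (a.1 k)‖ ^ 2)) ^ (-s)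
        = ∑' a : {X : Fin Knum → F // (∀ k, X k ∈ I⁻¹) ∧ X ≠ 0},
            r ^ (-s) * ‖u a‖ ^ (-s) := by
          refine tsum_congr fun a => ?_
          rw [hsqrt a, Real.mul_rpow hr0.le (norm_nonneg _)]
      _ = r ^ (-s) * ∑' a, ‖u a‖ ^ (-s) := tsum_mul_left
      _ ≤ D ^ (s * (q:ℝ)) * C := by
          have h2 : 0 ≤ ∑' a, ‖u a‖ ^ (-s) :=
            tsum_nonneg fun a => Real.rpow_nonneg (norm_nonneg _) _
          have h3 : ∑' a, ‖u a‖ ^ (-s) ≤ C := le_trans htsm_s (hCge m hmn)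
          exact mul_le_mul h1 h3 h2 (Real.rpow_nonneg hD0 _)
      _ = C * D ^ (s * (q:ℝ)) := mul_comm _ _
  exact hfinal
end
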